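/- Let 0 < α ≤ 1, let X be a complex Banach space and let T be a bounded linear operator on X satisfying ‖T^n‖ = O(n^α). Then either ‖T^n‖ = o(n^α) (i.e. ‖T^n‖/n^α → 0 as n → ∞), or the set { x ∈ X : sup_{N ∈ ℕ₀} (1/k^{α+1}(N)) · Σ_{j=0}^{N} k^α(N−j) ‖T^j x‖ = ∞ } is residual in X (i.e. its complement is meagre). -/

import Mathlib

open Filter
open scoped ENNReal

/-- The Cesàro kernel of order `α`: `k^α(n) = Γ(α+n) / (Γ(α)·Γ(n+1))`. -/
noncomputable def cesKernel (α : ℝ) (n : ℕ) : ℝ :=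
  Real.Gamma (α + n) / (Real.Gamma α * Real.Gamma (n + 1))

/-- A bounded linear operator `T` on a complex Banach space is absolutely `(C,α)`-Cesàro
bounded if there is `C > 0` with
`(1/k^{α+1}(n)) · Σ_{j=0}^n k^α(n-j) ‖T^j x‖ ≤ C ‖x‖` for all `n` and `x`. -/
def AbsCesaroBounded {X : Type*} [NormedAddCommGroup X] [NormedSpace ℂ X]
    (α : ℝ) (T : X →L[ℂ] X) : Prop :=
  ∃ C : ℝ, 0 < C ∧ ∀ (n : ℕ) (x : X),
    (cesKernel (α + 1) n)⁻¹ *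
      ∑ j ∈ Finset.range (n + 1), cesKernel α (n - j) * ‖(T ^ j) x‖ ≤ C * ‖x‖

lemma cesKernel_pos {α : ℝ} (hα : 0 < α) (n : ℕ) : 0 < cesKernel α n := by
  unfold cesKernel
  have h1 : (0:ℝ) < α + n := by positivity
  have h2 : (0:ℝ) < (n:ℝ) + 1 := by positivity
  exact div_pos (Real.Gamma_pos_of_pos h1)
    (mul_pos (Real.Gamma_pos_of_pos hα) (Real.Gamma_pos_of_pos h2))

lemma cesKernel_zero {α : ℝ} (hα : 0 < α) : cesKernel α 0 = 1 := by
  unfold cesKernel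
  simp [Real.Gamma_one]
  exact (Real.Gamma_pos_of_pos hα).ne'

lemma cesKernel_succ {α : ℝ} (hα : 0 < α) (n : ℕ) :
    cesKernel α (n + 1) = cesKernel α n * ((α + n) / (n + 1)) := by
  unfold cesKernel
  have h1 : α + ((n:ℝ) + 1) = (α + n) + 1 := by ring
  have h2 : ((n:ℝ) + 1) + 1 = ((n:ℝ) + 1) + 1 := rfl
  push_cast
  rw [h1, Real.Gamma_add_one (by positivity), Real.Gamma_add_one (by positivity : ((n:ℝ)+1) ≠ 0)]
  have hΓα : Real.Gamma α ≠ 0 := (Real.Gamma_pos_of_pos hα).ne'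
  have hΓn : Real.Gamma ((n:ℝ)+1) ≠ 0 := (Real.Gamma_pos_of_pos (by positivity)).ne'
  field_simp

lemma cesKernel_one {α : ℝ} (hα : 0 < α) : cesKernel α 1 = α := by
  have := cesKernel_succ hα 0
  rw [cesKernel_zero hα] at this
  simpa using this

lemma cesKernel_lb {α : ℝ} (hα0 : 0 < α) (hα1 : α ≤ 1) :
    ∀ m : ℕ, 1 ≤ m → α * (m:ℝ) ^ (α - 1) ≤ cesKernel α m := by
  intro m hm
  induction m, hm using Nat.le_induction with
  | base => simp [cesKernel_one hα0]
  | succ m hm ih =>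
    have hm0 : (0:ℝ) < m := by exact_mod_cast hm
    rw [cesKernel_succ hα0]
    have key : ((m:ℝ) + 1) ^ α ≤ (α + m) * (m:ℝ) ^ (α - 1) := by
      have amgm := Real.geom_mean_le_arith_mean2_weighted hα0.le
        (by linarith : (0:ℝ) ≤ 1 - α) (by positivity : (0:ℝ) ≤ (m:ℝ)+1) hm0.le
        (by ring)
      -- (m+1)^α * m^(1-α) ≤ α*(m+1) + (1-α)*m = m + α
      have h1 : α * ((m:ℝ)+1) + (1-α) * m = α + m := by ring
      rw [h1] at amgm
      have hmpow : (0:ℝ) < (m:ℝ) ^ (1 - α) := Real.rpow_pos_of_pos hm0 _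
      have h2 : (m:ℝ) ^ (α - 1) = ((m:ℝ) ^ (1 - α))⁻¹ := by
        rw [← Real.rpow_neg hm0.le]; ring_nf
      rw [h2, mul_comm (α + (m:ℝ)), ← div_eq_inv_mul, le_div_iff₀ hmpow]
      exact amgm
    push_cast
    calc α * ((m:ℝ)+1) ^ (α-1)
        = α * (((m:ℝ)+1) ^ α / ((m:ℝ)+1)) := by
          rw [← Real.rpow_sub_one (by positivity)]
      _ ≤ α * ((α + m) * (m:ℝ) ^ (α-1) / ((m:ℝ)+1)) := by
          apply mul_le_mul_of_nonneg_left _ hα0.le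
          apply div_le_div_of_nonneg_right key (by positivity) |>.trans_eq rfl
      _ = (α * (m:ℝ) ^ (α-1)) * ((α + m) / (m+1)) := by push_cast; ring
      _ ≤ cesKernel α m * ((α + m) / (m+1)) := by
          have : α * (m:ℝ) ^ (α-1) ≤ cesKernel α m := by push_cast at ih ⊢; exact ih
          apply mul_le_mul_of_nonneg_right this (by positivity)

lemma one_add_div_le_rpow {α : ℝ} (hα0 : 0 < α) (N : ℕ) (hN : 1 ≤ N) :
    1 + α / ((N:ℝ) + 1) ≤ (((N:ℝ)+1)/N) ^ α := by
  have hN0 : (0:ℝ) < N := by exact_mod_cast hN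
  have h1 : 1 + α / ((N:ℝ)+1) ≤ Real.exp (α / ((N:ℝ)+1)) := by
    have := Real.add_one_le_exp (α / ((N:ℝ)+1)); linarith
  have h2 : Real.exp (α / ((N:ℝ)+1)) = (Real.exp (1/((N:ℝ)+1))) ^ α := by
    rw [Real.rpow_def_of_pos (Real.exp_pos _), Real.log_exp]
    ring_nf
  have h3 : Real.exp (1/((N:ℝ)+1)) ≤ ((N:ℝ)+1)/N := by
    rw [← Real.exp_log (show (0:ℝ) < ((N:ℝ)+1)/N by positivity)]
    apply Real.exp_le_exp.2
    have := Real.one_sub_inv_le_log_of_pos (show (0:ℝ) < ((N:ℝ)+1)/N by positivity)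
    have hinv : (((N:ℝ)+1)/N)⁻¹ = N/((N:ℝ)+1) := by field_simp
    rw [hinv] at this
    have : 1 - (N:ℝ)/((N:ℝ)+1) = 1/((N:ℝ)+1) := by field_simp; ring
    linarith [Real.one_sub_inv_le_log_of_pos (show (0:ℝ) < ((N:ℝ)+1)/N by positivity), this]
  calc 1 + α / ((N:ℝ)+1) ≤ (Real.exp (1/((N:ℝ)+1))) ^ α := h1.trans h2.le
    _ ≤ (((N:ℝ)+1)/N) ^ α := Real.rpow_le_rpow (Real.exp_pos _).le h3 hα0.le

lemma cesKernel_ub {α : ℝ} (hα0 : 0 < α) :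
    ∀ N : ℕ, 1 ≤ N → cesKernel (α + 1) N ≤ Real.exp α * (N:ℝ) ^ α := by
  have hα1 : 0 < α + 1 := by linarith
  intro N hN
  induction N, hN using Nat.le_induction with
  | base =>
    rw [cesKernel_one hα1]
    simp only [Nat.cast_one, Real.one_rpow, mul_one]
    linarith [Real.add_one_le_exp α]
  | succ N hN ih =>
    have hN0 : (0:ℝ) < N := by exact_mod_cast hN
    rw [cesKernel_succ hα1]
    have key := one_add_div_le_rpow hα0 N hN
    have hNp : (0:ℝ) < ((N:ℝ)+1) := by positivity
    have step : ((N:ℝ))^α * ((α + 1 + N)/((N:ℝ)+1)) ≤ ((N:ℝ)+1)^α := by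
      have h1 : (α + 1 + (N:ℝ))/((N:ℝ)+1) = 1 + α/((N:ℝ)+1) := by field_simp; ring
      rw [h1]
      calc ((N:ℝ))^α * (1 + α/((N:ℝ)+1)) ≤ ((N:ℝ))^α * ((((N:ℝ)+1)/N)^α) := by
            apply mul_le_mul_of_nonneg_left key (by positivity)
        _ = ((N:ℝ)+1)^α := by
            rw [← Real.mul_rpow hN0.le (by positivity)]
            field_simp
    calc cesKernel (α+1) N * ((α + 1 + N)/(N+1))
        ≤ (Real.exp α * (N:ℝ)^α) * ((α + 1 + N)/((N:ℝ)+1)) := by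
          apply mul_le_mul_of_nonneg_right ih
          positivity
      _ = Real.exp α * ((N:ℝ)^α * ((α + 1 + N)/((N:ℝ)+1))) := by push_cast; ring
      _ ≤ Real.exp α * ((N:ℝ)+1)^α := by
          apply mul_le_mul_of_nonneg_left step (Real.exp_pos _).le
      _ = Real.exp α * ((N+1 : ℕ) : ℝ)^α := by push_cast; ring

lemma harm_lb : ∀ N : ℕ, Real.log ((N:ℝ) + 1) ≤ ∑ i ∈ Finset.range N, 1/((i:ℝ)+1) := by
  intro N
  induction N with
  | zero => simp
  | succ N ih =>
    rw [Finset.sum_range_succ]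
    have h : Real.log ((N:ℝ)+1+1) - Real.log ((N:ℝ)+1) ≤ 1/((N:ℝ)+1) := by
      rw [← Real.log_div (by positivity) (by positivity)]
      have := Real.log_le_sub_one_of_pos
        (show (0:ℝ) < ((N:ℝ)+1+1)/((N:ℝ)+1) by positivity)
      have h2 : ((N:ℝ)+1+1)/((N:ℝ)+1) - 1 = 1/((N:ℝ)+1) := by field_simp; ring
      linarith
    push_cast
    linarith

lemma tendsto_of_acb {X : Type*} [NormedAddCommGroup X] [NormedSpace ℂ X]
    (α : ℝ) (hα0 : 0 < α) (hα1 : α ≤ 1) (T : X →L[ℂ] X)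
    (hO : ∃ C : ℝ, ∀ n : ℕ, 1 ≤ n → ‖T ^ n‖ ≤ C * (n : ℝ) ^ α)
    (hB : AbsCesaroBounded α T) :
    Tendsto (fun n : ℕ => ‖T ^ n‖ / (n : ℝ) ^ α) atTop (nhds 0) := by
  obtain ⟨C₀, hC₀⟩ := hO
  obtain ⟨C, hCpos, hC⟩ := hB
  set C₁ : ℝ := max C₀ 1 with hC₁def
  have hC₁pos : (0:ℝ) < C₁ := lt_of_lt_of_le one_pos (le_max_right _ _)
  have hC₁ : ∀ n : ℕ, 1 ≤ n → ‖T ^ n‖ ≤ C₁ * (n : ℝ) ^ α := by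
    intro n hn
    refine (hC₀ n hn).trans ?_
    apply mul_le_mul_of_nonneg_right (le_max_left _ _)
    positivity
  set K : ℝ := C₁ * C * Real.exp α / α with hKdef
  have hKpos : 0 < K := by positivity
  -- key pointwise bound
  have key : ∀ N : ℕ, 1 ≤ N → ∀ x : X,
      ‖(T ^ N) x‖ * Real.log ((N:ℝ) + 1) ≤ K * (N:ℝ) ^ α * ‖x‖ := by
    intro N hN x
    have hkpos := cesKernel_pos (by linarith : (0:ℝ) < α + 1) N
    -- upper bound on the sum
    have hsum_ub : ∑ j ∈ Finset.range (N + 1), cesKernel α (N - j) * ‖(T ^ j) x‖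
        ≤ C * Real.exp α * (N:ℝ) ^ α * ‖x‖ := by
      have h1 := hC N x
      have h2 : ∑ j ∈ Finset.range (N + 1), cesKernel α (N - j) * ‖(T ^ j) x‖
          ≤ cesKernel (α+1) N * (C * ‖x‖) := by
        have := mul_le_mul_of_nonneg_left h1 hkpos.le
        rwa [← mul_assoc, mul_inv_cancel₀ hkpos.ne', one_mul] at this
      refine h2.trans ?_
      have h3 := cesKernel_ub hα0 N hN
      calc cesKernel (α+1) N * (C * ‖x‖) ≤ (Real.exp α * (N:ℝ)^α) * (C * ‖x‖) := by
            apply mul_le_mul_of_nonneg_right h3 (by positivity)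
        _ = C * Real.exp α * (N:ℝ)^α * ‖x‖ := by ring
    -- lower bound on the sum
    have hterm : ∀ j ∈ Finset.range N,
        (α / C₁) * ‖(T ^ N) x‖ * (1 / ((N - j : ℕ) : ℝ))
          ≤ cesKernel α (N - j) * ‖(T ^ j) x‖ := by
      intro j hj
      rw [Finset.mem_range] at hj
      have hmn : 1 ≤ N - j := by omega
      have hmr : (0:ℝ) < ((N - j : ℕ) : ℝ) := by exact_mod_cast hmn
      have hTx : ‖(T ^ N) x‖ ≤ C₁ * ((N - j : ℕ) : ℝ) ^ α * ‖(T ^ j) x‖ := by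
        have hdecomp : T ^ N = T ^ (N - j) * T ^ j := by
          rw [← pow_add]; congr 1; omega
        calc ‖(T ^ N) x‖ = ‖(T ^ (N - j)) ((T ^ j) x)‖ := by rw [hdecomp]; rfl
          _ ≤ ‖T ^ (N - j)‖ * ‖(T ^ j) x‖ := ContinuousLinearMap.le_opNorm _ _
          _ ≤ C₁ * ((N - j : ℕ) : ℝ) ^ α * ‖(T ^ j) x‖ := by
              apply mul_le_mul_of_nonneg_right (hC₁ _ hmn) (norm_nonneg _)
      have hTjx : ‖(T ^ N) x‖ / (C₁ * ((N - j : ℕ) : ℝ) ^ α) ≤ ‖(T ^ j) x‖ := by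
        rw [div_le_iff₀ (by positivity)]
        calc ‖(T ^ N) x‖ ≤ C₁ * ((N - j : ℕ) : ℝ) ^ α * ‖(T ^ j) x‖ := hTx
          _ = ‖(T ^ j) x‖ * (C₁ * ((N - j : ℕ) : ℝ) ^ α) := by ring
      have hklb := cesKernel_lb hα0 hα1 (N - j) hmn
      calc (α / C₁) * ‖(T ^ N) x‖ * (1 / ((N - j : ℕ) : ℝ))
          = (α * ((N - j : ℕ) : ℝ) ^ (α - 1)) *
              (‖(T ^ N) x‖ / (C₁ * ((N - j : ℕ) : ℝ) ^ α)) := by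
            rw [Real.rpow_sub hmr, Real.rpow_one]
            field_simp
        _ ≤ cesKernel α (N - j) * ‖(T ^ j) x‖ := by
            apply mul_le_mul hklb hTjx (by positivity)
            exact (cesKernel_pos hα0 _).le
    have hreflect : ∑ j ∈ Finset.range N, (1 / ((N - j : ℕ) : ℝ))
        = ∑ i ∈ Finset.range N, 1/((i:ℝ)+1) := by
      have h1 : ∑ i ∈ Finset.range N, 1/((i:ℝ)+1)
          = ∑ i ∈ Finset.range N, 1/(((i+1 : ℕ)) : ℝ) := by
        apply Finset.sum_congr rfl
        intro i _
        push_cast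
        ring
      rw [h1, ← Finset.sum_range_reflect (fun i => 1/(((i+1 : ℕ)) : ℝ)) N]
      apply Finset.sum_congr rfl
      intro j hj
      rw [Finset.mem_range] at hj
      have h2 : N - 1 - j + 1 = N - j := by omega
      rw [h2]
    have hsum_lb : (α / C₁) * ‖(T ^ N) x‖ * Real.log ((N:ℝ)+1)
        ≤ ∑ j ∈ Finset.range (N + 1), cesKernel α (N - j) * ‖(T ^ j) x‖ := by
      calc (α / C₁) * ‖(T^N) x‖ * Real.log ((N:ℝ)+1)
          ≤ (α / C₁) * ‖(T^N) x‖ * ∑ i ∈ Finset.range N, 1/((i:ℝ)+1) := by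
            apply mul_le_mul_of_nonneg_left (harm_lb N) (by positivity)
        _ = ∑ j ∈ Finset.range N, (α / C₁) * ‖(T^N) x‖ * (1/((N-j:ℕ):ℝ)) := by
            rw [← hreflect, Finset.mul_sum]
        _ ≤ ∑ j ∈ Finset.range N, cesKernel α (N - j) * ‖(T ^ j) x‖ :=
            Finset.sum_le_sum hterm
        _ ≤ ∑ j ∈ Finset.range (N+1), cesKernel α (N - j) * ‖(T ^ j) x‖ := by
            apply Finset.sum_le_sum_of_subset_of_nonneg (Finset.range_subset_range.2 (by omega))
            intro j _ _
            exact mul_nonneg (cesKernel_pos hα0 _).le (norm_nonneg _)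
    have h := hsum_lb.trans hsum_ub
    have heq : ‖(T^N) x‖ * Real.log ((N:ℝ)+1)
        = (C₁/α) * ((α/C₁) * ‖(T^N) x‖ * Real.log ((N:ℝ)+1)) := by
      field_simp
    rw [heq]
    calc (C₁/α) * ((α/C₁) * ‖(T^N) x‖ * Real.log ((N:ℝ)+1))
        ≤ (C₁/α) * (C * Real.exp α * (N:ℝ)^α * ‖x‖) :=
          mul_le_mul_of_nonneg_left h (by positivity)
      _ = K * (N:ℝ)^α * ‖x‖ := by rw [hKdef]; field_simp
  -- operator norm bound
  have hop : ∀ N : ℕ, 1 ≤ N → ‖T ^ N‖ / (N:ℝ)^α ≤ K / Real.log ((N:ℝ)+1) := by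
    intro N hN
    have hNr : (0:ℝ) < N := by exact_mod_cast hN
    have hlog : 0 < Real.log ((N:ℝ)+1) := Real.log_pos (by linarith)
    have hopn : ‖T ^ N‖ ≤ K * (N:ℝ)^α / Real.log ((N:ℝ)+1) := by
      apply ContinuousLinearMap.opNorm_le_bound _ (by positivity)
      intro x
      rw [div_mul_eq_mul_div, le_div_iff₀ hlog]
      exact key N hN x
    calc ‖T ^ N‖ / (N:ℝ)^α ≤ (K * (N:ℝ)^α / Real.log ((N:ℝ)+1)) / (N:ℝ)^α := by
          apply div_le_div_of_nonneg_right hopn (by positivity) |>.trans_eq rfl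
      _ = K / Real.log ((N:ℝ)+1) := by
          field_simp
  have hlim : Tendsto (fun N : ℕ => K / Real.log ((N:ℝ)+1)) atTop (nhds 0) := by
    apply Tendsto.div_atTop tendsto_const_nhds
    apply Real.tendsto_log_atTop.comp
    exact tendsto_atTop_add_const_right _ 1 tendsto_natCast_atTop_atTop
  apply tendsto_of_tendsto_of_tendsto_of_le_of_le' tendsto_const_nhds hlim
  · filter_upwards [eventually_ge_atTop 1] with N hN
    have hNr : (0:ℝ) < N := by exact_mod_cast hN
    positivity
  · filter_upwards [eventually_ge_atTop 1] with N hN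
    exact hop N hN

/-- Let `0 < α ≤ 1`, `X` a complex Banach space and `T ∈ B(X)` with `‖T^n‖ = O(n^α)`.
Then either `‖T^n‖ = o(n^α)`, or the set of `x ∈ X` for which
`sup_N (1/k^{α+1}(N)) Σ_{j=0}^N k^α(N-j) ‖T^j x‖ = ∞` is residual in `X`. -/
theorem stmt4 {X : Type*} [NormedAddCommGroup X] [NormedSpace ℂ X] [CompleteSpace X]
    (α : ℝ) (hα0 : 0 < α) (hα1 : α ≤ 1) (T : X →L[ℂ] X)
    (hO : ∃ C : ℝ, ∀ n : ℕ, 1 ≤ n → ‖T ^ n‖ ≤ C * (n : ℝ) ^ α) :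
    Tendsto (fun n : ℕ => ‖T ^ n‖ / (n : ℝ) ^ α) atTop (nhds 0) ∨
      {x : X | ∀ M : ℝ, ∃ N : ℕ,
          M < (cesKernel (α + 1) N)⁻¹ *
            ∑ j ∈ Finset.range (N + 1), cesKernel α (N - j) * ‖(T ^ j) x‖}
        ∈ residual X := by
  set g : ℕ → X → ℝ := fun N x => (cesKernel (α + 1) N)⁻¹ *
      ∑ j ∈ Finset.range (N + 1), cesKernel α (N - j) * ‖(T ^ j) x‖ with hg
  have hginv : ∀ N : ℕ, 0 < (cesKernel (α + 1) N)⁻¹ :=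
    fun N => inv_pos.2 (cesKernel_pos (by linarith) N)
  have gadd : ∀ (n : ℕ) (a b : X), g n (a + b) ≤ g n a + g n b := by
    intro n a b
    simp only [hg]
    rw [← mul_add, ← Finset.sum_add_distrib]
    apply mul_le_mul_of_nonneg_left _ (hginv n).le
    apply Finset.sum_le_sum
    intro j _
    rw [← mul_add]
    apply mul_le_mul_of_nonneg_left _ (cesKernel_pos hα0 _).le
    rw [map_add]
    exact norm_add_le _ _
  have gsmul : ∀ (n : ℕ) (c : ℝ) (x : X), 0 ≤ c → g n ((c:ℂ) • x) = c * g n x := by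
    intro n c x hc
    simp only [hg]
    rw [Finset.mul_sum, Finset.mul_sum]
    congr 1
    rw [Finset.mul_sum]
    apply Finset.sum_congr rfl
    intro j _
    rw [map_smul, norm_smul, Complex.norm_real, Real.norm_eq_abs, abs_of_nonneg hc]
    ring
  have gcont : ∀ N : ℕ, Continuous (g N) := by
    intro N
    apply Continuous.mul continuous_const
    apply continuous_finset_sum
    intro j _
    exact continuous_const.mul ((T ^ j).continuous.norm)
  by_cases hd : ∀ k : ℕ, Dense {x : X | ∃ N, (k:ℝ) < g N x}
  · right
    have hmem : (⋂ k : ℕ, {x : X | ∃ N, (k:ℝ) < g N x}) ∈ residual X := by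
      rw [countable_iInter_mem]
      intro k
      apply residual_of_dense_open _ (hd k)
      rw [Set.setOf_exists]
      exact isOpen_iUnion fun N => isOpen_lt continuous_const (gcont N)
    apply Filter.mem_of_superset hmem
    intro x hx M
    simp only [Set.mem_iInter, Set.mem_setOf_eq] at hx
    obtain ⟨k, hkM⟩ := exists_nat_gt M
    obtain ⟨N, hN⟩ := hx k
    exact ⟨N, lt_trans hkM hN⟩
  · left
    push_neg at hd
    obtain ⟨k, hk⟩ := hd
    unfold Dense at hk
    push_neg at hk
    obtain ⟨x₀, hx₀⟩ := hk
    rw [Metric.mem_closure_iff] at hx₀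
    push_neg at hx₀
    obtain ⟨ε, hε, hball⟩ := hx₀
    -- every y with dist x₀ y < ε satisfies ∀ N, g N y ≤ k
    have hbd : ∀ y : X, dist x₀ y < ε → ∀ N : ℕ, g N y ≤ (k:ℝ) := by
      intro y hy N
      by_contra hlt
      push_neg at hlt
      exact absurd hy (not_lt.2 (hball y ⟨N, hlt⟩))
    apply tendsto_of_acb α hα0 hα1 T hO
    refine ⟨4 * ((k:ℝ) + 1) / ε, by positivity, ?_⟩
    intro n x
    show g n x ≤ 4 * ((k:ℝ) + 1) / ε * ‖x‖
    rcases eq_or_ne x 0 with rfl | hx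
    · have : g n 0 = 0 := by
        simp only [hg]
        simp
      simp [this]
    · have hxn : (0:ℝ) < ‖x‖ := norm_pos_iff.2 hx
      set c : ℝ := ε / (2 * ‖x‖) with hcdef
      have hcpos : 0 < c := by positivity
      have h1 : g n ((c:ℂ) • x) ≤ 2 * ((k:ℝ) + 1) := by
        have hy : dist x₀ (x₀ + (c:ℂ) • x) < ε := by
          rw [dist_eq_norm]
          have he : x₀ - (x₀ + (c:ℂ) • x) = -((c:ℂ) • x) := by abel
          rw [he, norm_neg, norm_smul, Complex.norm_real, Real.norm_eq_abs,
            abs_of_nonneg hcpos.le]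
          have hcx : c * ‖x‖ = ε / 2 := by rw [hcdef]; field_simp
          rw [hcx]
          linarith
        have hy2 := hbd _ hy n
        have hx₀2 := hbd x₀ (by simp [hε]) n
        have hsplit : (c:ℂ) • x = (x₀ + (c:ℂ) • x) + (-x₀) := by abel
        have hnegx₀ : g n (-x₀) = g n x₀ := by
          simp only [hg]
          congr 1
          apply Finset.sum_congr rfl
          intro j _
          rw [map_neg, norm_neg]
        have hga := gadd n (x₀ + (c:ℂ) • x) (-x₀)
        have heq2 : x₀ + (c:ℂ) • x + -x₀ = (c:ℂ) • x := by abel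
        rw [heq2] at hga
        calc g n ((c:ℂ) • x) ≤ g n (x₀ + (c:ℂ) • x) + g n (-x₀) := hga
          _ = g n (x₀ + (c:ℂ) • x) + g n x₀ := by rw [hnegx₀]
          _ ≤ (k:ℝ) + (k:ℝ) := add_le_add hy2 hx₀2
          _ ≤ 2 * ((k:ℝ) + 1) := by linarith
      rw [gsmul n c x hcpos.le] at h1
      rw [hcdef] at h1
      have key2 : g n x = (2 * ‖x‖ / ε) * (ε / (2 * ‖x‖) * g n x) := by
        field_simp
      rw [key2]
      calc (2 * ‖x‖ / ε) * (ε / (2 * ‖x‖) * g n x)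
          ≤ (2 * ‖x‖ / ε) * (2 * ((k:ℝ) + 1)) :=
            mul_le_mul_of_nonneg_left h1 (by positivity)
        _ = 4 * ((k:ℝ) + 1) / ε * ‖x‖ := by field_simp; ring
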